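/- arXiv:2004.04214 — 3 statements merged into one kernel-verified Lean document; each statement's English description precedes it below -/
import Mathlib

section
/- Let φ = (Q, Σ, δ, q₀) be a DFA with trap error state q_err, and let R : List Σ → Γ → Prop be a loss model. Define the lifted transition on sets of states Δ : Set Q → Γ → Set Q by Δ(S, γ) = {δ*(q, x) | q ∈ S, x ∈ R⁻¹(γ)}, extended to strings of Γ. Then for every y ∈ Γ* and every completion x ∈ R⁻¹(γ₁)·…·R⁻¹(γ_k) of y, the state δ*(q₀, x) belongs to Δ*({q₀}, y). (Superposed monitor condition: the alternate monitor's state set always contains the primary monitor's state.) -/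
open Set

variable {σ Γ Q : Type*}

def evalFrom (δ : Q → σ → Q) (q : Q) (x : List σ) : Q :=
  x.foldl δ q

def Completions (R : List σ → Γ → Prop) : List Γ → Set (List σ)
  | [] => {[]}
  | γ :: y => {x | ∃ u v, R u γ ∧ v ∈ Completions R y ∧ x = u ++ v}

def liftTrans (δ : Q → σ → Q) (R : List σ → Γ → Prop) (S : Set Q) (γ : Γ) : Set Q :=
  {q' | ∃ q ∈ S, ∃ x, R x γ ∧ evalFrom δ q x = q'}

def liftEval (δ : Q → σ → Q) (R : List σ → Γ → Prop) (S : Set Q) (y : List Γ) : Set Q :=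
  y.foldl (liftTrans δ R) S

lemma superposed_aux (δ : Q → σ → Q) (R : List σ → Γ → Prop) :
    ∀ (y : List Γ) (S : Set Q) (q : Q), q ∈ S → ∀ x ∈ Completions R y,
      evalFrom δ q x ∈ liftEval δ R S y := by
  intro y
  induction y with
  | nil =>
    intro S q hq x hx
    simp [Completions] at hx
    subst hx
    simpa [liftEval, evalFrom] using hq
  | cons γ y ih =>
    intro S q hq x hx
    obtain ⟨u, v, hu, hv, rfl⟩ := hx
    have h1 : evalFrom δ q u ∈ liftTrans δ R S γ := ⟨q, hq, u, hu, rfl⟩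
    have := ih (liftTrans δ R S γ) _ h1 v hv
    simpa [liftEval, evalFrom, List.foldl_append] using this

theorem superposed_condition (δ : Q → σ → Q) (q₀ qerr : Q)
    (htrap : ∀ a, δ qerr a = qerr) (R : List σ → Γ → Prop)
    (y : List Γ) (x : List σ) (hx : x ∈ Completions R y) :
    evalFrom δ q₀ x ∈ liftEval δ R {q₀} y := by
  exact superposed_aux δ R y {q₀} q₀ rfl x hx
end

section
/- With the setup of the optimal superposed monitor: the monitor recognizes exactly L_opt, the set of lossy strings produced by some non-violating execution. Precisely, for every y ∈ Γ*: Δ*({q₀}, y) ⊈ {q_err} if and only if there exists a completion x of y with δ*(q₀, x) ≠ q_err. (Assume each R⁻¹(γ) is nonempty, or equivalently restrict to y with at least one completion.) -/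
open Set

variable {σ Γ Q : Type*}

lemma mem_liftEval_iff (δ : Q → σ → Q) (R : List σ → Γ → Prop) (y : List Γ) :
    ∀ (S : Set Q) (q' : Q),
      q' ∈ liftEval δ R S y ↔ ∃ q ∈ S, ∃ x ∈ Completions R y, evalFrom δ q x = q' := by
  induction y with
  | nil =>
    intro S q'
    simp [liftEval, Completions, evalFrom]
  | cons γ y ih =>
    intro S q'
    show q' ∈ liftEval δ R (liftTrans δ R S γ) y ↔ _
    rw [ih]
    constructor
    · rintro ⟨q1, ⟨q, hq, u, hu, rfl⟩, v, hv, rfl⟩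
      exact ⟨q, hq, u ++ v, ⟨u, v, hu, hv, rfl⟩,
        by simp [evalFrom, List.foldl_append]⟩
    · rintro ⟨q, hq, x, ⟨u, v, hu, hv, rfl⟩, rfl⟩
      exact ⟨evalFrom δ q u, ⟨q, hq, u, hu, rfl⟩, v, hv,
        by simp [evalFrom, List.foldl_append]⟩

theorem optimal_recognizes_Lopt (δ : Q → σ → Q) (q₀ qerr : Q)
    (htrap : ∀ a, δ qerr a = qerr) (R : List σ → Γ → Prop)
    (hne : ∀ γ : Γ, ∃ x, R x γ) (y : List Γ) :
    ¬ liftEval δ R {q₀} y ⊆ {qerr} ↔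
      ∃ x ∈ Completions R y, evalFrom δ q₀ x ≠ qerr := by
  rw [Set.not_subset]
  constructor
  · rintro ⟨q', hq', hne'⟩
    rw [mem_liftEval_iff] at hq'
    obtain ⟨q, rfl, x, hx, rfl⟩ := hq'
    exact ⟨x, hx, by simpa using hne'⟩
  · rintro ⟨x, hx, hne'⟩
    exact ⟨evalFrom δ q₀ x,
      (mem_liftEval_iff δ R y {q₀} _).2 ⟨q₀, rfl, x, hx, rfl⟩, by simpa using hne'⟩
end

section
/- Existence of a regular over-approximation with equal transition behavior: let φ be a DFA with finite state set Q over Σ, and let L ⊆ Σ* be an arbitrary language. Define, for each q ∈ Q, f(q) = {δ*(q, x) | x ∈ L} and l(q) = {x ∈ Σ* | δ*(q, x) ∈ f(q)}, and let L' = ⋂_{q∈Q} l(q). Then (i) each l(q) is a regular language, hence L' is regular; (ii) L ⊆ L'; and (iii) for every q ∈ Q, {δ*(q, x) | x ∈ L'} = f(q). -/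
variable {σ Q : Type*}

/-- Image of the language `L` under the state-transformation starting from `q`. -/
def fimg (δ : Q → σ → Q) (L : Set (List σ)) (q : Q) : Set Q :=
  (fun x => x.foldl δ q) '' L

/-- `l(q)`: the strings taking `q` into `f(q)`. -/
def lpre (δ : Q → σ → Q) (L : Set (List σ)) (q : Q) : Set (List σ) :=
  {x | x.foldl δ q ∈ fimg δ L q}

/-- `L' = ⋂_q l(q)`. -/
def Lbig (δ : Q → σ → Q) (L : Set (List σ)) : Set (List σ) :=
  ⋂ q : Q, lpre δ L q

/-! `l(q)` is recognised by `φ` itself, restarted at `q` with `f(q)` as accepting set, and regular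
languages are closed under finite intersections. Each `l(q)` contains `L`, so `L ⊆ L'`; hence
`f(q) ⊆ {δ*(q, x) | x ∈ L'}`, and conversely `x ∈ L' ⊆ l(q)` gives `δ*(q, x) ∈ f(q)`. -/

theorem DFA.isRegular_accepts {T S : Type*} [Fintype S] (M : DFA T S) : M.accepts.IsRegular :=
  Language.isRegular_iff.2 ⟨S, inferInstance, M, rfl⟩

namespace Language

variable {T : Type*}

theorem isRegular_top : (⊤ : Language T).IsRegular :=
  DFA.isRegular_accepts (⟨fun _ _ => (), (), Set.univ⟩ : DFA T Unit)

theorem IsRegular.finset_inf {ι : Type*} {L : ι → Language T} (s : Finset ι)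
    (h : ∀ i ∈ s, (L i).IsRegular) : (s.inf L).IsRegular :=
  Finset.inf_induction isRegular_top (fun _ h₁ _ h₂ => h₁.inf h₂) h

theorem IsRegular.iInf {ι : Type*} [Finite ι] {L : ι → Language T}
    (h : ∀ i, (L i).IsRegular) : (⨅ i, L i).IsRegular := by
  have := Fintype.ofFinite ι
  rw [← Finset.inf_univ_eq_iInf]
  exact IsRegular.finset_inf _ fun i _ => h i

end Language

section Overapproximation

variable (δ : Q → σ → Q) (L : Set (List σ))

theorem lpre_eq_accepts (q : Q) :
    (lpre δ L q : Language σ) = (⟨δ, q, fimg δ L q⟩ : DFA σ Q).accepts :=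
  rfl

theorem subset_lpre (q : Q) : L ⊆ lpre δ L q :=
  fun x hx => ⟨x, hx, rfl⟩

theorem subset_Lbig : L ⊆ Lbig δ L :=
  Set.subset_iInter (subset_lpre δ L)

theorem fimg_Lbig (q : Q) : fimg δ (Lbig δ L) q = fimg δ L q := by
  refine (Set.image_subset_iff.2 fun x hx => ?_).antisymm (Set.image_mono (subset_Lbig δ L))
  exact Set.mem_iInter.1 hx q

end Overapproximation

theorem regular_overapproximation [Fintype Q] (δ : Q → σ → Q) (L : Set (List σ)) :
    (∀ q : Q, Language.IsRegular (lpre δ L q)) ∧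
      Language.IsRegular (Lbig δ L) ∧
      L ⊆ Lbig δ L ∧
      (∀ q : Q, fimg δ (Lbig δ L) q = fimg δ L q) := by
  have hlpre : ∀ q, Language.IsRegular (lpre δ L q) := fun q =>
    lpre_eq_accepts δ L q ▸ DFA.isRegular_accepts _
  exact ⟨hlpre, Language.IsRegular.iInf hlpre, subset_Lbig δ L, fimg_Lbig δ L⟩
end
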